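/- arXiv:2407.10710 — 3 statements merged into one kernel-verified Lean document; each statement's English description precedes it below -/
import Mathlib

section
/- Let M = {0} ∪ {xₙ : n ∈ ℕ} ∪ {z} be the metric space with d(xₙ,xₘ) = d(xₙ,0) = d(xₙ,z) = 1 for all n ≠ m, and d(0,z) = 2. Define a topology τ on M in which every point except x₁ is isolated, and the sets Uₙ = {x_k : k ≥ n} form a neighbourhood basis at x₁. Then (M,τ) is compact and the distance function d : (M,τ) × (M,τ) → ℝ is lower semicontinuous. -/
noncomputable section

/-- The metric space `M = {0} ∪ {xₙ : n ∈ ℕ} ∪ {z}` from Example `ex:freespaceexamppropio`. -/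
inductive Mpt : Type
  | zero : Mpt
  | x : ℕ → Mpt
  | z : Mpt
  deriving DecidableEq

/-- The distance: `d(xₙ,xₘ) = d(xₙ,0) = d(xₙ,z) = 1` for `n ≠ m`, and `d(0,z) = 2`. -/
def Mdist : Mpt → Mpt → ℝ := fun a b =>
  if a = b then 0
  else if (a = Mpt.zero ∧ b = Mpt.z) ∨ (a = Mpt.z ∧ b = Mpt.zero) then 2
  else 1

/-- The topology `τ` on `M` in which every point except `x₀` (playing the role of `x₁`) is
isolated, and the sets `Uₙ = {x_k : k ≥ n}` form a neighbourhood basis at `x₀`. -/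
instance Mtau : TopologicalSpace Mpt where
  IsOpen U := Mpt.x 0 ∈ U → ∃ n : ℕ, ∀ k ≥ n, Mpt.x k ∈ U
  isOpen_univ := fun _ => ⟨0, fun _ _ => trivial⟩
  isOpen_inter := by
    intro U V hU hV hmem
    obtain ⟨n, hn⟩ := hU hmem.1
    obtain ⟨m, hm⟩ := hV hmem.2
    exact ⟨max n m, fun k hk =>
      ⟨hn k (le_trans (le_max_left n m) hk), hm k (le_trans (le_max_right n m) hk)⟩⟩
  isOpen_sUnion := by
    intro S hS hmem
    obtain ⟨t, htS, hxt⟩ := hmem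
    obtain ⟨n, hn⟩ := hS t htS hxt
    exact ⟨n, fun k hk => ⟨t, htS, hn k hk⟩⟩

lemma Mdist_nonneg (a b : Mpt) : 0 ≤ Mdist a b := by
  unfold Mdist; split_ifs <;> norm_num

lemma Mdist_le_two (a b : Mpt) : Mdist a b ≤ 2 := by
  unfold Mdist; split_ifs <;> norm_num

lemma one_le_Mdist {a b : Mpt} (h : a ≠ b) : 1 ≤ Mdist a b := by
  unfold Mdist; split_ifs <;> norm_num <;> tauto

lemma Mdist_self (a : Mpt) : Mdist a a = 0 := by simp [Mdist]

lemma Mtau_isOpen_singleton {a : Mpt} (h : a ≠ Mpt.x 0) : IsOpen ({a} : Set Mpt) := by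
  intro hx
  exact absurd hx.symm h

lemma tail_mem_nhds (m : ℕ) :
    {q : Mpt | q = Mpt.x 0 ∨ ∃ k, m ≤ k ∧ q = Mpt.x k} ∈ nhds (Mpt.x 0) := by
  apply IsOpen.mem_nhds
  · intro _
    exact ⟨m, fun k hk => Or.inr ⟨k, hk, rfl⟩⟩
  · exact Or.inl rfl

def Midx : Mpt → ℕ
  | Mpt.x j => j + 1
  | _ => 0

lemma x_ne_of_idx_le {b : Mpt} {k : ℕ} (h : Midx b ≤ k) : Mpt.x k ≠ b := by
  cases b with
  | zero => simp
  | z => simp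
  | x j => simp [Midx] at h ⊢; omega

/-- `d` is a metric on `M`, `(M,τ)` is compact, and
`d : (M,τ) × (M,τ) → ℝ` is lower semicontinuous. -/
theorem Mtau_compact_and_dist_lsc :
    (∀ a b : Mpt, Mdist a b = 0 ↔ a = b) ∧
    (∀ a b : Mpt, Mdist a b = Mdist b a) ∧
    (∀ a b c : Mpt, Mdist a c ≤ Mdist a b + Mdist b c) ∧
    CompactSpace Mpt ∧
    LowerSemicontinuous (fun p : Mpt × Mpt => Mdist p.1 p.2) := by
  refine ⟨?_, ?_, ?_, ?_, ?_⟩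
  · intro a b
    unfold Mdist
    split_ifs with h1 h2 <;> simp [h1] <;> norm_num <;> tauto
  · intro a b
    unfold Mdist
    rcases eq_or_ne a b with h | h
    · simp [h]
    · rw [if_neg h, if_neg (Ne.symm h)]
      by_cases h2 : (a = Mpt.zero ∧ b = Mpt.z) ∨ (a = Mpt.z ∧ b = Mpt.zero)
      · rw [if_pos h2, if_pos (by tauto)]
      · rw [if_neg h2, if_neg (by tauto)]
  · intro a b c
    rcases eq_or_ne a c with hac | hac
    · rw [hac, Mdist_self]
      exact add_nonneg (Mdist_nonneg _ _) (Mdist_nonneg _ _)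
    rcases eq_or_ne a b with hab | hab
    · rw [hab, Mdist_self, zero_add]
    rcases eq_or_ne b c with hbc | hbc
    · rw [hbc, Mdist_self, add_zero]
    have := Mdist_le_two a c
    have := one_le_Mdist hab
    have := one_le_Mdist hbc
    linarith
  · constructor
    rw [isCompact_iff_ultrafilter_le_nhds]
    intro f _
    by_cases hfin : ∃ s ∈ f, s.Finite
    · obtain ⟨s, hs, hsf⟩ := hfin
      obtain ⟨a, _, ha⟩ := Ultrafilter.eq_pure_of_finite_mem hsf hs
      exact ⟨a, trivial, ha ▸ pure_le_nhds a⟩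
    · push_neg at hfin
      refine ⟨Mpt.x 0, trivial, fun U hU => ?_⟩
      obtain ⟨V, hVU, hVopen, hxV⟩ := mem_nhds_iff.mp hU
      obtain ⟨n, hn⟩ := hVopen hxV
      have hcompl : Vᶜ.Finite := by
        apply Set.Finite.subset (s := insert Mpt.zero (insert Mpt.z (Mpt.x '' Set.Iio n)))
        · exact (Set.finite_Iio n).image _ |>.insert _ |>.insert _
        · intro q hq
          cases q with
          | zero => simp
          | z => simp
          | x k =>
            by_cases hk : n ≤ k
            · exact absurd (hn k hk) hq
            · simp only [Set.mem_insert_iff, Set.mem_image]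
              exact Or.inr (Or.inr ⟨k, Set.mem_Iio.mpr (by omega), rfl⟩)
      have hUc : Uᶜ ∉ f := fun h => hfin _ h (hcompl.subset (Set.compl_subset_compl.mpr hVU))
      exact (Ultrafilter.compl_notMem_iff).mp hUc
  · rintro ⟨a, b⟩ y hy
    simp only at hy
    by_cases hnn : y < 0
    · exact Filter.Eventually.of_forall fun q => lt_of_lt_of_le hnn (Mdist_nonneg _ _)
    push_neg at hnn
    have hne : a ≠ b := by
      intro h
      rw [h, Mdist_self] at hy
      linarith
    by_cases ha : a = Mpt.x 0
    · subst ha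
      have hb : b ≠ Mpt.x 0 := fun h => hne h.symm
      have hy1 : y < 1 := lt_of_lt_of_le hy (by
        unfold Mdist
        split_ifs with h1 h2 <;> simp_all)
      filter_upwards [prod_mem_nhds (tail_mem_nhds (Midx b))
        ((Mtau_isOpen_singleton hb).mem_nhds rfl)] with q hq
      obtain ⟨hq1, hq2⟩ := hq
      simp only [Set.mem_singleton_iff] at hq2
      have hq1ne : q.1 ≠ q.2 := by
        rw [hq2]
        rcases hq1 with h | ⟨k, hk, h⟩
        · rw [h]; exact hne
        · rw [h]; exact x_ne_of_idx_le hk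
      exact lt_of_lt_of_le hy1 (one_le_Mdist hq1ne)
    · by_cases hb : b = Mpt.x 0
      · subst hb
        have hy1 : y < 1 := lt_of_lt_of_le hy (by
          unfold Mdist
          split_ifs with h1 h2 <;> simp_all)
        filter_upwards [prod_mem_nhds ((Mtau_isOpen_singleton ha).mem_nhds rfl)
          (tail_mem_nhds (Midx a))] with q hq
        obtain ⟨hq1, hq2⟩ := hq
        simp only [Set.mem_singleton_iff] at hq1
        have hq1ne : q.1 ≠ q.2 := by
          rw [hq1]
          rcases hq2 with h | ⟨k, hk, h⟩
          · rw [h]; exact hne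
          · rw [h]; exact (x_ne_of_idx_le hk).symm
        exact lt_of_lt_of_le hy1 (one_le_Mdist hq1ne)
      · filter_upwards [prod_mem_nhds ((Mtau_isOpen_singleton ha).mem_nhds rfl)
          ((Mtau_isOpen_singleton hb).mem_nhds rfl)] with q hq
        obtain ⟨hq1, hq2⟩ := hq
        simp only [Set.mem_singleton_iff] at hq1 hq2
        rw [hq1, hq2]
        exact hy
end
end

section
/- Let X, Y be Banach spaces and suppose the set NA(X, Y*) − NA(X, Y*) (differences of norm-attaining operators) is not dense in L(X, Y*). Then NA(X, Y*) is nowhere dense in L(X, Y*): its closure has empty interior. -/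
/-!
Norm-attaining operators form a cone: they are stable under all scalar multiples. If the closure
of a cone `C` contained a ball around `U`, then for every `T` and small `t ≠ 0` the operator
`U + t • T` would lie in `closure C`, so `t • T ∈ closure (C - C)`; rescaling gives
`T ∈ closure (C - C)`, i.e. `C - C` would be dense.
-/

open Filter Topology

theorem smul_mem_image2_sub {M E : Type*} [Monoid M] [AddGroup E] [DistribMulAction M E]
    {C : Set E} (hC : ∀ (c : M), ∀ x ∈ C, c • x ∈ C) (c : M) {x : E}
    (hx : x ∈ Set.image2 (· - ·) C C) : c • x ∈ Set.image2 (· - ·) C C := by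
  obtain ⟨a, ha, b, hb, rfl⟩ := hx
  exact ⟨c • a, hC c a ha, c • b, hC c b hb, (smul_sub c a b).symm⟩

theorem dense_image2_sub_of_interior_closure_nonempty {𝕜 E : Type*} [NontriviallyNormedField 𝕜]
    [AddCommGroup E] [Module 𝕜 E] [TopologicalSpace E] [IsTopologicalAddGroup E]
    [ContinuousSMul 𝕜 E] {C : Set E} (hC : ∀ (c : 𝕜), ∀ x ∈ C, c • x ∈ C)
    (hint : (interior (closure C)).Nonempty) : Dense (Set.image2 (· - ·) C C) := by
  obtain ⟨U, hU⟩ := hint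
  intro T
  have hline : ∀ᶠ t : 𝕜 in 𝓝[≠] 0, U + t • T ∈ closure C := by
    refine eventually_nhdsWithin_of_eventually_nhds
      (Eventually.mono ?_ fun _ h ↦ interior_subset h)
    refine (isOpen_interior.preimage (by fun_prop)).mem_nhds ?_
    simpa using hU
  obtain ⟨t, hUt, ht⟩ := (hline.and self_mem_nhdsWithin).exists
  have hsub : t • T ∈ closure (Set.image2 (· - ·) C C) := by
    simpa using map_mem_closure₂ continuous_sub hUt (interior_subset hU)
      fun a ha b hb ↦ Set.mem_image2_of_mem ha hb
  simpa [smul_smul, inv_mul_cancel₀ ht] using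
    map_mem_closure (continuous_const_smul t⁻¹) hsub fun _ ↦ smul_mem_image2_sub hC t⁻¹

def normAttaining (𝕜 E F : Type*) [NontriviallyNormedField 𝕜] [SeminormedAddCommGroup E]
    [NormedSpace 𝕜 E] [SeminormedAddCommGroup F] [NormedSpace 𝕜 F] : Set (E →L[𝕜] F) :=
  {G | ∃ x : E, ‖x‖ = 1 ∧ ‖G x‖ = ‖G‖}

theorem smul_mem_normAttaining {𝕜 E F : Type*} [NontriviallyNormedField 𝕜]
    [SeminormedAddCommGroup E] [NormedSpace 𝕜 E] [SeminormedAddCommGroup F] [NormedSpace 𝕜 F]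
    (c : 𝕜) {G : E →L[𝕜] F} (hG : G ∈ normAttaining 𝕜 E F) : c • G ∈ normAttaining 𝕜 E F := by
  obtain ⟨x, hx, hGx⟩ := hG
  exact ⟨x, hx, by rw [smul_apply, norm_smul, norm_smul, hGx]⟩

theorem NA_nowhereDense_of_differences_not_dense_general
    (X Y : Type*) [NormedAddCommGroup X] [NormedSpace ℝ X]
    [NormedAddCommGroup Y] [NormedSpace ℝ Y]
    (NA : Set (X →L[ℝ] (Y →L[ℝ] ℝ)))
    (hNA : NA = {G | ∃ x : X, ‖x‖ = 1 ∧ ‖G x‖ = ‖G‖})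
    (h : ¬ Dense (Set.image2 (· - ·) NA NA)) :
    interior (closure NA) = ∅ := by
  have hcone : ∀ (c : ℝ), ∀ G ∈ NA, c • G ∈ NA := by
    subst hNA
    exact fun c _ ↦ smul_mem_normAttaining c
  exact Set.not_nonempty_iff_eq_empty.1 fun hne ↦
    h (dense_image2_sub_of_interior_closure_nonempty (C := NA) hcone hne)

/-- If the set of differences of norm-attaining operators `X → Y*` is not
dense in `L(X, Y*)`, then the set of norm-attaining operators is nowhere dense in `L(X, Y*)`. -/
theorem NA_nowhereDense_of_differences_not_dense
    (X Y : Type*) [NormedAddCommGroup X] [NormedSpace ℝ X] [CompleteSpace X]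
    [NormedAddCommGroup Y] [NormedSpace ℝ Y] [CompleteSpace Y]
    (NA : Set (X →L[ℝ] (Y →L[ℝ] ℝ)))
    (hNA : NA = {G | ∃ x : X, ‖x‖ = 1 ∧ ‖G x‖ = ‖G‖})
    (h : ¬ Dense (Set.image2 (· - ·) NA NA)) :
    interior (closure NA) = ∅ :=
  NA_nowhereDense_of_differences_not_dense_general X Y NA hNA h
end

section
/- The norm of ℓ₁ (the space of absolutely summable real sequences) is nowhere Fréchet differentiable: there is no point x ∈ ℓ₁ at which the norm function ‖·‖₁ is Fréchet differentiable. -/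
noncomputable section

open scoped ENNReal in
instance : Fact ((1 : ℝ≥0∞) ≤ 1) := ⟨le_rfl⟩

open scoped ENNReal

lemma l1_norm_add_single (x : lp (fun _ : ℕ => ℝ) 1) (N : ℕ) (t : ℝ) :
    ‖x + lp.single 1 N t‖ = ‖x‖ + (|x N + t| - |x N|) := by
  have hp : (0:ℝ) < (1 : ℝ≥0∞).toReal := by norm_num
  have h1 := lp.hasSum_norm hp x
  have h2 := lp.hasSum_norm hp (x + lp.single 1 N t)
  simp only [ENNReal.toReal_one, Real.rpow_one] at h1 h2
  have h3 : HasSum (fun i => ‖x i‖ + (if i = N then |x N + t| - |x N| else 0))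
      (‖x‖ + (|x N + t| - |x N|)) := h1.add (hasSum_ite_eq N _)
  refine h2.unique ?_
  convert h3 using 2 with i
  by_cases h : i = N
  · subst h
    simp [lp.coeFn_add, lp.single_apply_self, Real.norm_eq_abs]
  · simp [lp.coeFn_add, lp.single_apply_ne 1 N _ h, Real.norm_eq_abs, h]

/-- The norm of `ℓ₁` (absolutely summable real sequences) is nowhere
Fréchet differentiable. -/
theorem l1_norm_nowhere_frechet_differentiable
    (x : lp (fun _ : ℕ => ℝ) 1) :
    ¬ DifferentiableAt ℝ (fun y : lp (fun _ : ℕ => ℝ) 1 => ‖y‖) x := by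
  intro hd
  obtain ⟨φ, hφ⟩ : ∃ φ, HasFDerivAt (fun y : lp (fun _ : ℕ => ℝ) 1 => ‖y‖) φ x :=
    ⟨_, hd.hasFDerivAt⟩
  rw [hasFDerivAt_iff_isLittleO_nhds_zero] at hφ
  have hb := hφ.def (by norm_num : (0:ℝ) < 1/2)
  rw [Metric.eventually_nhds_iff] at hb
  obtain ⟨δ, hδ, hball⟩ := hb
  -- coordinates tend to zero
  have hp : (0:ℝ) < (1 : ℝ≥0∞).toReal := by norm_num
  have hsum := (lp.memℓp x).summable hp
  simp only [ENNReal.toReal_one, Real.rpow_one] at hsum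
  have htend : Filter.Tendsto (fun n => ‖x n‖) Filter.atTop (nhds 0) :=
    hsum.tendsto_atTop_zero
  obtain ⟨N, hN⟩ := (Metric.tendsto_atTop.mp htend (δ/4) (by linarith)).imp
    (fun N h => h N le_rfl)
  have haN : |x N| < δ/4 := by
    simpa [Real.norm_eq_abs, abs_of_nonneg (abs_nonneg _)] using hN
  set a : ℝ := x N with ha
  set t : ℝ := 2 * |a| + δ/4 with ht
  have htpos : 0 < t := by positivity
  have hta : |a| ≤ t := by simp [ht]; linarith [abs_nonneg a]
  -- the two perturbations
  have hnorm : ∀ s : ℝ, ‖(lp.single 1 N s : lp (fun _ : ℕ => ℝ) 1)‖ = |s| := fun s => by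
    simpa [Real.norm_eq_abs] using lp.norm_single (E := fun _ : ℕ => ℝ) hp (fun _ : ℕ => s) N
  have key : ∀ s : ℝ, |s| < δ →
      ‖(|a + s| - |a|) - φ (lp.single 1 N s)‖ ≤ 1/2 * |s| := by
    intro s hs
    have hd : dist (lp.single 1 N s) (0 : lp (fun _ : ℕ => ℝ) 1) < δ := by
      simpa [dist_zero_right, hnorm s] using hs
    have := hball hd
    simpa [l1_norm_add_single, hnorm s, Real.norm_eq_abs, ha] using this
  have htδ : t < δ := by rw [ht]; linarith
  have h1 := key t (by rwa [abs_of_pos htpos])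
  have h2 := key (-t) (by rwa [abs_neg, abs_of_pos htpos])
  have hneg : (lp.single 1 N (-t) : lp (fun _ : ℕ => ℝ) 1) = -lp.single 1 N t := lp.single_neg (E := fun _ : ℕ => ℝ) 1 N t
  rw [hneg, map_neg] at h2
  have e1 : |a + t| = a + t := abs_of_nonneg (by
    have := neg_abs_le a; linarith)
  have e2 : |a + -t| = t - a := by
    rw [abs_of_nonpos (by have := le_abs_self a; linarith)]; ring
  rw [Real.norm_eq_abs] at h1 h2
  have s1 := abs_le.mp h1
  have s2 := abs_le.mp h2
  rw [e1] at s1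
  rw [e2] at s2
  rw [abs_neg] at s2
  rw [abs_of_pos htpos] at s1 s2
  have : 2*t - 2*|a| ≤ t := by linarith [s1.2, s2.2]
  rw [ht] at this
  linarith
end
end
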